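/- arXiv:1305.3596 — 4 statements merged into one kernel-verified Lean document; each statement's English description precedes it below -/
import Mathlib

section
/- Suppose N, B, T are positive integers with N ≤ B ≤ T, and suppose there exist a finite field F, positive integers k and n with k ≥ 1, a (k,n) streaming encoder, and a delay-T decoder that together correct every erasure pattern in the channel C_I(N,B). Then the rate R = k/n satisfies R·B + (1−R)·N ≤ (1−R)·(T+1); equivalently, since R < 1, (R/(1−R))·B + N ≤ T+1. -/
open scoped Classical

/-- A `(k,n)` streaming encoder over `F`: at each time `i` it maps the source symbols
`s[0], …, s[i]` to a channel symbol in `Fⁿ`. -/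
def Encoder (F : Type) (k n : ℕ) : Type :=
  (i : ℕ) → (Fin (i + 1) → (Fin k → F)) → (Fin n → F)

/-- The channel input `x[i]` produced by the encoder `f` from the source sequence `s`. -/
def chInput {F : Type} {k n : ℕ} (f : Encoder F k n) (s : ℕ → Fin k → F) (i : ℕ) :
    Fin n → F :=
  f i (fun t => s t)

/-- The channel output under erasure pattern `E`: `none` (the erasure symbol `⋆`) at erased
positions, `some x[i]` otherwise. -/
noncomputable def chOutput {F : Type} {k n : ℕ} (f : Encoder F k n) (E : Set ℕ)
    (s : ℕ → Fin k → F) (i : ℕ) : Option (Fin n → F) :=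
  if i ∈ E then none else some (chInput f s i)

/-- A delay-`T` decoder family: at time `i + T` it maps `y[0], …, y[i+T]` to a source symbol. -/
def Decoder (F : Type) (k n T : ℕ) : Type :=
  (i : ℕ) → (Fin (i + T + 1) → Option (Fin n → F)) → (Fin k → F)

/-- The code `(f, g)` corrects the erasure pattern `E` with delay `T`: for every source
sequence, each `s[i]` is reproduced from `y[0], …, y[i+T]`. -/
def Corrects {F : Type} {k n T : ℕ} (f : Encoder F k n) (g : Decoder F k n T)
    (E : Set ℕ) : Prop :=
  ∀ (s : ℕ → Fin k → F) (i : ℕ), g i (fun t => chOutput f E s t) = s i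

/-- The channel `C_I(N, B)` with window length `T + 1`: in every window of `T + 1` consecutive
indices, the erasures are either contained in a single interval of `B` consecutive integers,
or number at most `N`. -/
def ChannelI (N B T : ℕ) : Set (Set ℕ) :=
  {E | ∀ j : ℕ,
    (∃ b : ℕ, E ∩ Set.Icc j (j + T) ⊆ Set.Ico b (b + B)) ∨
    (E ∩ Set.Icc j (j + T)).ncard ≤ N}

/-!
Erase periodically: bursts of `B` symbols separated by `W = T + 1 - N` clean ones. As
`T + 1 ≤ W + B`, a window of length `T + 1` meets at most two bursts, and when it meets two it
contains the `W` clean symbols between them, so it holds at most `N` erasures: the pattern lies in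
`C_I(N,B)`. A code correcting it recovers the first `M(W + B) + T` source symbols from the at most
`MW + T` unerased channel symbols and the last `T` source symbols, so
`k·M(W + B) ≤ n(MW + T)` for every `M`, whence `k(W + B) ≤ nW`, which is the rate bound.
-/

open Finset

section StreamingCode

variable {F : Type} {k n T : ℕ} {f : Encoder F k n} {g : Decoder F k n T} {E : Set ℕ}

theorem Corrects.eq_of_chOutput_eq (hcorr : Corrects f g E) {s s' : ℕ → Fin k → F} {i : ℕ}
    (h : ∀ t < i + T + 1, chOutput f E s t = chOutput f E s' t) : s i = s' i := by
  rw [← hcorr s i, ← hcorr s' i]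
  exact congrArg (g i) (funext fun t => h t t.2)

def padSource [Zero F] {L : ℕ} (σ : Fin L → Fin k → F) : ℕ → Fin k → F :=
  fun t => if h : t < L then σ ⟨t, h⟩ else 0

theorem Corrects.mul_le_mul_count_notMem [Fintype F] [Nontrivial F] [Zero F]
    (hcorr : Corrects f g E) (L : ℕ) :
    k * L ≤ n * Nat.count (· ∉ E) (L + T) := by
  set U := (range (L + T)).filter (· ∉ E)
  let Ψ : (Fin (L + T) → Fin k → F) → (U → Fin n → F) × (Fin T → Fin k → F) :=
    fun σ => (fun u => chInput f (padSource σ) u, fun t => σ ⟨L + t, by omega⟩)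
  have hΨ : Function.Injective Ψ := by
    intro σ σ' h
    obtain ⟨hin, htail⟩ := Prod.ext_iff.mp h
    have hout : ∀ t < L + T, chOutput f E (padSource σ) t = chOutput f E (padSource σ') t := by
      intro t ht
      by_cases htE : t ∈ E
      · simp [chOutput, htE]
      · simp only [chOutput, if_neg htE]
        exact congrArg some (congrFun hin ⟨t, by simp [U, ht, htE]⟩)
    funext ⟨i, hi⟩
    by_cases hiL : i < L
    · simpa [padSource, hi] using hcorr.eq_of_chOutput_eq (i := i) fun t ht => hout t (by omega)
    · have := congrFun htail ⟨i - L, by omega⟩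
      simpa [Ψ, show L + (i - L) = i by omega] using this
  have hcard := Fintype.card_le_of_injective Ψ hΨ
  simp only [Fintype.card_prod, Fintype.card_fun, Fintype.card_fin, Fintype.card_coe] at hcard
  rw [← pow_mul, ← pow_mul, ← pow_mul, ← pow_add,
    Nat.pow_le_pow_iff_right Fintype.one_lt_card] at hcard
  rw [Nat.count_eq_card_filter_range]
  linarith

end StreamingCode

def periodicBurst (B W : ℕ) : Set ℕ := {t | t % (W + B) < B}

theorem count_notMem_periodicBurst_le (B W M T : ℕ) :
    Nat.count (· ∉ periodicBurst B W) (M * (W + B) + T) ≤ M * W + T := by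
  have hperiod : Nat.count (· ∉ periodicBurst B W) (W + B) = W := by
    have hburst : Nat.count (· ∉ periodicBurst B W) B = 0 :=
      Nat.count_of_forall_not fun r hr => by
        simp [periodicBurst, Nat.mod_eq_of_lt (by omega : r < W + B), hr]
    have hgap : Nat.count (fun r => B + r ∉ periodicBurst B W) W = W :=
      Nat.count_of_forall fun r hr => by
        simp [periodicBurst, Nat.mod_eq_of_lt (by omega : B + r < W + B)]
    rw [add_comm, Nat.count_add, hburst, hgap, zero_add]
  have hblocks : ∀ M, Nat.count (· ∉ periodicBurst B W) (M * (W + B)) = M * W := by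
    intro M
    induction M with
    | zero => simp
    | succ M ih =>
      have hshift :
          (fun r => M * (W + B) + r ∉ periodicBurst B W) = (· ∉ periodicBurst B W) := by
        funext r
        simp [periodicBurst]
      rw [add_mul, one_mul, Nat.count_add, ih]
      simp only [hshift, hperiod]
      ring
  rw [Nat.count_add, hblocks]
  exact Nat.add_le_add_left (Nat.count_le _) _

theorem mem_Ico_or_mem_Ico_of_mem_periodicBurst {B W m t : ℕ} (ht : t ∈ periodicBurst B W)
    (hlo : m * (W + B) ≤ t) (hhi : t < m * (W + B) + 2 * (W + B)) :
    t ∈ Set.Ico (m * (W + B)) (m * (W + B) + B) ∨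
      t ∈ Set.Ico (m * (W + B) + (W + B)) (m * (W + B) + (W + B) + B) := by
  set P := W + B
  simp only [periodicBurst, Set.mem_ofPred_eq, Set.mem_Ico] at ht ⊢
  by_cases h : t < m * P + P
  · rw [show t = m * P + (t - m * P) by omega, Nat.mul_add_mod_of_lt (by omega)] at ht
    omega
  · rw [show t = (m + 1) * P + (t - m * P - P) by rw [add_mul, one_mul]; omega,
      Nat.mul_add_mod_of_lt (by omega)] at ht
    omega

theorem periodicBurst_mem_channelI {N B T W : ℕ} (hW : W + N = T + 1) (hNB : N ≤ B) :
    periodicBurst B W ∈ ChannelI N B T := by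
  intro j
  set P := W + B
  have hP : 0 < P := by omega
  set a := j / P * P
  have hja : a ≤ j := Nat.div_mul_le_self j P
  have hjP : j < a + P := Nat.lt_div_mul_add hP
  have hwin : ∀ t ∈ periodicBurst B W ∩ Set.Icc j (j + T),
      t ∈ Set.Ico a (a + B) ∨ t ∈ Set.Ico (a + P) (a + P + B) := by
    rintro t ⟨ht, hjt, htT⟩
    exact mem_Ico_or_mem_Ico_of_mem_periodicBurst ht (hja.trans hjt)
      (show t < a + 2 * P by omega)
  by_cases hfirst : j + T < a + P
  · exact Or.inl ⟨a, fun t ht => (hwin t ht).resolve_right fun h => by linarith [ht.2.2, h.1]⟩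
  by_cases hsecond : a + B ≤ j
  · exact Or.inl ⟨a + P, fun t ht =>
      (hwin t ht).resolve_left fun h => by linarith [ht.2.1, h.2]⟩
  right
  calc _ ≤ (Set.Ico j (a + B) ∪ Set.Ico (a + P) (j + T + 1)).ncard := by
        refine Set.ncard_le_ncard (fun t ht => ?_) ((Set.finite_Ico _ _).union (Set.finite_Ico _ _))
        have hjt := ht.2.1
        have htT := ht.2.2
        rcases hwin t ht with h | h <;> simp only [Set.mem_union, Set.mem_Ico] at h ⊢ <;> omega
    _ ≤ (Set.Ico j (a + B)).ncard + (Set.Ico (a + P) (j + T + 1)).ncard := Set.ncard_union_le _ _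
    _ ≤ N := by simp only [Set.ncard_Ico_nat]; omega

theorem le_of_forall_mul_le_mul_add {a b c : ℕ} (h : ∀ M, a * M ≤ b * M + c) : a ≤ b := by
  by_contra! hab
  nlinarith [h (c + 1)]

theorem div_mul_le_of_mul_le {k n : ℕ} {x y : ℝ} (hy : 0 ≤ y) (h : k * x ≤ n * y) :
    (k : ℝ) / n * x ≤ y := by
  rcases (Nat.cast_nonneg (α := ℝ) n).eq_or_lt with hn | hn
  · simp [← hn, hy]
  · rw [div_mul_eq_mul_div, div_le_iff₀ hn]
    linarith

theorem div_one_sub_mul_le {R B W : ℝ} (hR : 0 ≤ R) (hB : 0 ≤ B) (hW : 0 ≤ W)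
    (h : R * B ≤ (1 - R) * W) : R / (1 - R) * B ≤ W := by
  rcases lt_or_ge 0 (1 - R) with hR1 | hR1
  · rw [div_mul_eq_mul_div, div_le_iff₀ hR1]
    linarith
  · exact (mul_nonpos_of_nonpos_of_nonneg (div_nonpos_of_nonneg_of_nonpos hR hR1) hB).trans hW

theorem stmt0_general (N B T : ℕ) (hNB : N ≤ B) (hBT : B ≤ T)
    (F : Type) [Field F] [Fintype F] (k n : ℕ)
    (f : Encoder F k n) (g : Decoder F k n T)
    (hcorr : ∀ E ∈ ChannelI N B T, Corrects f g E) :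
    ((k : ℝ) / n) * B + (1 - (k : ℝ) / n) * N ≤ (1 - (k : ℝ) / n) * (T + 1) ∧
    ((k : ℝ) / n) / (1 - (k : ℝ) / n) * B + N ≤ T + 1 := by
  set W := T + 1 - N
  have hW : W + N = T + 1 := by omega
  have hcorrE := hcorr _ (periodicBurst_mem_channelI hW hNB)
  have hrate : k * (W + B) ≤ n * W := le_of_forall_mul_le_mul_add fun M =>
    calc k * (W + B) * M = k * (M * (W + B)) := by ring
      _ ≤ n * Nat.count (· ∉ periodicBurst B W) (M * (W + B) + T) :=
        hcorrE.mul_le_mul_count_notMem _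
      _ ≤ n * (M * W + T) := Nat.mul_le_mul_left n (count_notMem_periodicBurst_le B W M T)
      _ = n * W * M + n * T := by ring
  have hWr : (W : ℝ) = T + 1 - N := by
    rw [eq_sub_iff_add_eq]; exact_mod_cast hW
  have hRB : (k : ℝ) / n * B ≤ (1 - (k : ℝ) / n) * W := by
    have := div_mul_le_of_mul_le (x := W + B) (Nat.cast_nonneg (α := ℝ) W)
      (by exact_mod_cast hrate)
    linarith
  have hRB' := div_one_sub_mul_le (by positivity) (Nat.cast_nonneg B) (Nat.cast_nonneg W) hRB
  rw [hWr] at hRB hRB'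
  constructor <;> linarith

/-- Converse bound for channel `C_I(N,B)`: any rate-`R = k/n` streaming code with delay `T`
correcting every pattern of `C_I(N,B)` satisfies `R·B + (1−R)·N ≤ (1−R)·(T+1)`, equivalently
`(R/(1−R))·B + N ≤ T+1`. -/
theorem stmt0 (N B T : ℕ) (hN : 0 < N) (hNB : N ≤ B) (hBT : B ≤ T)
    (F : Type) [Field F] [Fintype F] (k n : ℕ) (hk : 1 ≤ k) (hn : 0 < n)
    (f : Encoder F k n) (g : Decoder F k n T)
    (hcorr : ∀ E ∈ ChannelI N B T, Corrects f g E) :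
    ((k : ℝ) / n) * B + (1 - (k : ℝ) / n) * N ≤ (1 - (k : ℝ) / n) * (T + 1) ∧
    ((k : ℝ) / n) / (1 - (k : ℝ) / n) * B + N ≤ T + 1 :=
  stmt0_general N B T hNB hBT F k n f g hcorr
end

section
/- (Maximally Short codes) For any positive integers B ≤ T, there exist a finite field F, a (k,n) streaming encoder with k = T and n = T+B (hence of rate T/(T+B)), and a delay-T decoder that together correct every erasure pattern in which, within every window of T+1 consecutive time indices, the erased indices are contained in a single interval of at most B consecutive integers. This rate meets the Martinian–Sundberg bound B = T(1−R)/R with equality. -/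
open scoped Classical

/-- The burst-erasure channel: in every window of `T + 1` consecutive indices, the erased
indices are contained in a single interval of at most `B` consecutive integers. -/
def BurstChannel (B T : ℕ) : Set (Set ℕ) :=
  {E | ∀ j : ℕ, ∃ b : ℕ, E ∩ Set.Icc j (j + T) ⊆ Set.Ico b (b + B)}

/-!
Write `T = qB + r` with `0 ≤ r < B`. The code is systematic; parity slot `σ < B` at time `t`
repeats the `q` "high" source coordinates `r + ℓB + σ` (`ℓ < q`) with delays `T - ℓB ∈ [B + r, T]`,
and adds the `r` "low" coordinates `μ` with weights `x_σ ^ μ` and delays `B + μ - σ`, where the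
nodes `x_σ` are distinct and nonzero.

Decoding is by uniqueness, inductively in time. If `s[j]` is erased, everything before `j` is
already known and the window `[j, j + T]` is clear from `j + B` on, so the difference `u` of two
consistent sources (shifted to `j = 0`) vanishes before `0` and on `[B, T]`, and so do its
parities. The parities at times `B, …, B + r - 1` only see low coordinates; grouped along the
antidiagonals `m + μ = a` they form Vandermonde systems, so the low coordinates of `u` vanish at
all times `m < B`. After that, the parity in slot `σ` at time `T - ℓB` is exactly the high
coordinate `r + ℓB + σ` of `u[0]`.
-/

open Finset Function

namespace MaximallyShort

theorem mul_add_self_add_mod_le {ℓ B T : ℕ} (h : ℓ < T / B) : ℓ * B + B + T % B ≤ T := by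
  have := Nat.mul_le_mul_right B (h : ℓ + 1 ≤ T / B)
  rw [Nat.succ_mul] at this
  have := Nat.div_add_mod' T B
  omega

theorem eq_zero_of_sum_pow_mul_eq_zero_of_window {R : Type*} [CommRing R] [IsDomain R]
    {n lo N : ℕ} {f : Fin n → R} (hf : Injective f) (hf0 : ∀ i, f i ≠ 0) {y : ℕ → R}
    (hN : lo + n ≤ N) (hy : ∀ μ ∈ range N, μ ∉ Ico lo (lo + n) → y μ = 0)
    (h : ∀ i, ∑ μ ∈ range N, f i ^ μ * y μ = 0) : ∀ μ ∈ Ico lo (lo + n), y μ = 0 := by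
  have hwindow : ∀ i, ∑ k : Fin n, f i ^ (k : ℕ) * y (lo + k) = 0 := by
    intro i
    have hsub : Ico lo (lo + n) ⊆ range N := fun μ hμ => by
      rw [mem_Ico] at hμ
      rw [mem_range]
      omega
    have hsum : ∑ μ ∈ range N, f i ^ μ * y μ =
        f i ^ lo * ∑ k : Fin n, f i ^ (k : ℕ) * y (lo + k) := by
      rw [← sum_subset hsub fun μ hμ hμ' => by rw [hy μ hμ hμ', mul_zero], sum_Ico_eq_sum_range,
        Nat.add_sub_cancel_left, Fin.sum_univ_eq_sum_range (fun k => f i ^ k * y (lo + k)),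
        mul_sum]
      simp only [pow_add, mul_assoc]
    exact (mul_eq_zero.mp (hsum ▸ h i)).resolve_left (pow_ne_zero _ (hf0 i))
  intro μ hμ
  rw [mem_Ico] at hμ
  have := congrFun (Matrix.eq_zero_of_forall_index_sum_pow_mul_eq_zero hf hwindow)
    ⟨μ - lo, by omega⟩
  simpa [Nat.add_sub_cancel' hμ.1] using this

theorem natCast_succ_injective {p B : ℕ} (h : B < p) :
    Injective fun σ : Fin B => ((σ + 1 : ℕ) : ZMod p) := fun σ τ hστ => by
  rw [ZMod.natCast_eq_natCast_iff', Nat.mod_eq_of_lt (by omega), Nat.mod_eq_of_lt (by omega)]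
    at hστ
  exact Fin.ext (by omega)

theorem natCast_succ_ne_zero {p B : ℕ} (h : B < p) (σ : Fin B) : ((σ + 1 : ℕ) : ZMod p) ≠ 0 := by
  rw [ne_eq, ZMod.natCast_eq_zero_iff]
  exact Nat.not_dvd_of_pos_of_lt (by omega) (by omega)

noncomputable def consistentDecoder {F : Type} [Zero F] {k n : ℕ} (f : Encoder F k n) (T : ℕ) :
    Decoder F k n T := fun i y =>
  if h : ∃ s : ℕ → Fin k → F, ∀ t : Fin (i + T + 1), ∀ v ∈ y t, chInput f s t = v then
    h.choose i
  else 0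

theorem corrects_consistentDecoder {F : Type} [Zero F] {k n T : ℕ} {f : Encoder F k n}
    {E : Set ℕ} (h : ∀ (s s' : ℕ → Fin k → F) (i : ℕ),
      (∀ t ≤ i + T, t ∉ E → chInput f s' t = chInput f s t) → s' i = s i) :
    Corrects f (consistentDecoder f T) E := by
  intro s i
  have hs : ∃ s' : ℕ → Fin k → F, ∀ t : Fin (i + T + 1), ∀ v ∈ chOutput f E s t,
      chInput f s' t = v :=
    ⟨s, fun t v hv => by simp [chOutput] at hv; exact hv.2⟩
  rw [consistentDecoder, dif_pos hs]
  refine h s hs.choose i fun t ht htE => hs.choose_spec ⟨t, by omega⟩ _ ?_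
  simp [chOutput, htE]

section Parity

variable {F : Type*} [CommRing F] {B : ℕ} (T : ℕ) (x : Fin B → F)

/-- Sequences are indexed by `ℤ` (time) and `ℕ` (coordinate), so that delays and shifts need no
side conditions; the casts `(_ : ℕ)` make every delay visibly nonnegative. -/
def parity (u : ℤ → ℕ → F) (τ : ℤ) (σ : Fin B) : F :=
  ∑ ℓ ∈ range (T / B), u (τ - (T - ℓ * B : ℕ)) (T % B + ℓ * B + σ) +
    ∑ μ ∈ range (T % B), x σ ^ μ * u (τ - (B + μ - σ : ℕ)) μ

theorem parity_congr {u v : ℤ → ℕ → F} {τ : ℤ} (h : ∀ t ≤ τ, u t = v t) (σ : Fin B) :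
    parity T x u τ σ = parity T x v τ σ := by
  simp only [parity, h _ (sub_le_self _ (Int.natCast_nonneg _))]

theorem parity_sub (u v : ℤ → ℕ → F) (τ : ℤ) (σ : Fin B) :
    parity T x (u - v) τ σ = parity T x u τ σ - parity T x v τ σ := by
  simp only [parity, Pi.sub_apply, mul_sub, sum_sub_distrib]
  ring

theorem parity_shift (u : ℤ → ℕ → F) (j τ : ℤ) (σ : Fin B) :
    parity T x (fun t => u (t + j)) τ σ = parity T x u (τ + j) σ := by
  simp only [parity, sub_add_eq_add_sub]

theorem parity_eq_low_sum {u : ℤ → ℕ → F} (hneg : ∀ t < 0, u t = 0) {a : ℕ} {σ : Fin B}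
    (ha : a < σ + T % B) :
    parity T x u (B + a - σ) σ = ∑ μ ∈ range (T % B), x σ ^ μ * u (a - μ) μ := by
  have := σ.isLt
  rw [parity, sum_eq_zero, zero_add]
  · refine sum_congr rfl fun μ _ => ?_
    congr 2
    omega
  · intro ℓ hℓ
    have := mul_add_self_add_mod_le (mem_range.mp hℓ)
    exact congrFun (hneg _ (by omega)) _

structure IsBurstUndetectable (u : ℤ → ℕ → F) : Prop where
  before : ∀ t < 0, u t = 0
  after : ∀ t : ℤ, B ≤ t → t ≤ T → u t = 0
  parity_eq_zero : ∀ τ : ℤ, B ≤ τ → τ ≤ T → ∀ σ, parity T x u τ σ = 0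

end Parity

namespace IsBurstUndetectable

variable {F : Type*} [CommRing F] [IsDomain F] {B T : ℕ} {x : Fin B → F} {u : ℤ → ℕ → F}

/-- The parities in slots `σ` at times `B + a - σ` form a Vandermonde system in the unknowns
`u (a - μ) μ` of the antidiagonal `a`. -/
theorem low_eq_zero (hu : IsBurstUndetectable T x u) (hBT : B ≤ T) (hx : Injective x)
    (hx0 : ∀ σ, x σ ≠ 0) {m μ : ℕ} (hm : m < B) (hμ : μ < T % B) : u m μ = 0 := by
  have hT := mul_add_self_add_mod_le (Nat.div_pos hBT (by omega) : 0 < T / B)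
  obtain ⟨a, ha⟩ : ∃ a, a = m + μ := ⟨_, rfl⟩
  rw [show (m : ℤ) = a - μ by omega]
  refine eq_zero_of_sum_pow_mul_eq_zero_of_window (n := min a (T % B - 1) + 1 - (a + 1 - B))
    (lo := a + 1 - B) (N := T % B) (f := fun i => x ⟨a + 1 - T % B + i, by have := i.isLt; omega⟩)
    (y := fun μ' => u (a - μ') μ') ?_ (fun i => hx0 _) (by omega) ?_ ?_ μ (by simp; omega)
  · intro i j hij
    have := congrArg Fin.val (hx hij)
    exact Fin.ext (by simp at this; omega)
  · intro μ' hμ' hwin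
    simp only [mem_range, mem_Ico] at hμ' hwin
    by_cases ha : μ' ≤ a
    · exact congrFun (hu.after _ (by omega) (by omega)) _
    · exact congrFun (hu.before _ (by omega)) _
  · intro i
    have := i.isLt
    rw [← parity_eq_low_sum T x hu.before (σ := ⟨a + 1 - T % B + i, by omega⟩) (by simp; omega)]
    exact hu.parity_eq_zero _ (by simp; omega) (by simp; omega) _

theorem low_eq_zero_of_le (hu : IsBurstUndetectable T x u) (hBT : B ≤ T) (hx : Injective x)
    (hx0 : ∀ σ, x σ ≠ 0) {t : ℤ} (ht : t ≤ T) {μ : ℕ} (hμ : μ < T % B) : u t μ = 0 := by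
  rcases lt_or_ge t 0 with h | h
  · exact congrFun (hu.before t h) μ
  rcases lt_or_ge t B with h' | h'
  · lift t to ℕ using h
    exact hu.low_eq_zero hBT hx hx0 (by omega) hμ
  · exact congrFun (hu.after t h' ht) μ

theorem high_eq_zero (hu : IsBurstUndetectable T x u) (hBT : B ≤ T) (hx : Injective x)
    (hx0 : ∀ σ, x σ ≠ 0) {ℓ : ℕ} (hℓ : ℓ < T / B) (σ : Fin B) :
    u 0 (T % B + ℓ * B + σ) = 0 := by
  have hT := mul_add_self_add_mod_le hℓ
  have hB : 0 < B := Nat.pos_of_ne_zero fun hB => by simp [hB] at hℓ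
  have := hu.parity_eq_zero (T - ℓ * B : ℕ) (by omega) (by omega) σ
  rwa [parity, sum_eq_single ℓ, sub_self, sum_eq_zero fun μ hμ => by
    rw [hu.low_eq_zero_of_le hBT hx hx0 (by omega) (mem_range.mp hμ), mul_zero], add_zero] at this
  · intro b hb hbℓ
    have := mul_add_self_add_mod_le (mem_range.mp hb)
    rcases lt_or_gt_of_ne hbℓ with h | h
    · have : b * B < ℓ * B := by nlinarith
      exact congrFun (hu.before _ (by omega)) _
    · have : ℓ * B + B ≤ b * B := by nlinarith
      exact congrFun (hu.after _ (by omega) (by omega)) _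
  · exact fun h => absurd (mem_range.mpr hℓ) h

theorem eq_zero (hu : IsBurstUndetectable T x u) (hB : 0 < B) (hBT : B ≤ T) (hx : Injective x)
    (hx0 : ∀ σ, x σ ≠ 0) {μ : ℕ} (hμ : μ < T) : u 0 μ = 0 := by
  rcases lt_or_ge μ (T % B) with h | h
  · exact_mod_cast hu.low_eq_zero hBT hx hx0 hB h
  have hℓ : (μ - T % B) / B < T / B := by
    rw [Nat.div_lt_iff_lt_mul hB]
    have := Nat.div_add_mod' T B
    omega
  have hhigh := hu.high_eq_zero hBT hx hx0 hℓ ⟨(μ - T % B) % B, Nat.mod_lt _ hB⟩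
  have := Nat.div_add_mod' (μ - T % B) B
  rwa [show T % B + (μ - T % B) / B * B + (μ - T % B) % B = μ by omega] at hhigh

end IsBurstUndetectable

section Code

variable {F : Type} [CommRing F] {B : ℕ} (T : ℕ) (x : Fin B → F)

theorem isBurstUndetectable_shift {E : Set ℕ} (hE : E ∈ BurstChannel B T) {j : ℕ} (hjE : j ∈ E)
    {u : ℤ → ℕ → F} (hbefore : ∀ t < (j : ℤ), u t = 0)
    (hclear : ∀ t ≤ j + T, t ∉ E → u t = 0)
    (hparity : ∀ t ≤ j + T, t ∉ E → ∀ σ, parity T x u t σ = 0) :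
    IsBurstUndetectable T x fun t => u (t + j) := by
  obtain ⟨b, hb⟩ := hE j
  have hjb := hb ⟨hjE, by simp⟩
  have hnotE : ∀ t : ℕ, j + B ≤ t → t ≤ j + T → t ∉ E := fun t h₁ h₂ htE => by
    have := hb ⟨htE, by simp; omega⟩
    simp only [Set.mem_Ico] at hjb this
    omega
  refine ⟨fun t ht => hbefore _ (by omega), fun t h₁ h₂ => ?_, fun τ h₁ h₂ σ => ?_⟩
  · rw [show t + j = (t.toNat + j : ℕ) by omega]
    exact hclear _ (by omega) (hnotE _ (by omega) (by omega))
  · rw [parity_shift, show τ + j = (τ.toNat + j : ℕ) by omega]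
    exact hparity _ (by omega) (hnotE _ (by omega) (by omega)) σ

def zeroExt {k : ℕ} (s : ℕ → Fin k → F) (t : ℤ) (μ : ℕ) : F :=
  if h : 0 ≤ t ∧ μ < k then s t.toNat ⟨μ, h.2⟩ else 0

theorem zeroExt_of_neg {k : ℕ} (s : ℕ → Fin k → F) {t : ℤ} (ht : t < 0) : zeroExt s t = 0 := by
  funext μ
  simp [zeroExt, not_le.mpr ht]

theorem zeroExt_congr {k : ℕ} {s s' : ℕ → Fin k → F} {t : ℤ} (h : s' t.toNat = s t.toNat) :
    zeroExt s' t = zeroExt s t := by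
  funext μ
  simp [zeroExt, h]

def encoder : Encoder F T (T + B) := fun i hist =>
  Fin.append (hist (Fin.last i))
    (parity T x (zeroExt fun t => if h : t ≤ i then hist ⟨t, Nat.lt_succ_of_le h⟩ else 0) i)

theorem chInput_encoder (s : ℕ → Fin T → F) (i : ℕ) :
    chInput (encoder T x) s i = Fin.append (s i) (parity T x (zeroExt s) i) := by
  simp only [chInput, encoder]
  congr 1
  funext σ
  refine parity_congr T x (fun t ht => zeroExt_congr ?_) σ
  simp [show t.toNat ≤ i by omega]

theorem eq_of_chInput_encoder_eq [IsDomain F] (hB : 0 < B) (hBT : B ≤ T) (hx : Injective x)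
    (hx0 : ∀ σ, x σ ≠ 0) {E : Set ℕ} (hE : E ∈ BurstChannel B T) {s s' : ℕ → Fin T → F}
    {i : ℕ} (h : ∀ t ≤ i + T, t ∉ E → chInput (encoder T x) s' t = chInput (encoder T x) s t) :
    s' i = s i := by
  set d := zeroExt s' - zeroExt s with hd
  have hd_eq_zero : ∀ t : ℤ, s' t.toNat = s t.toNat → d t = 0 := fun t ht =>
    sub_eq_zero.mpr (zeroExt_congr ht)
  have hsys : ∀ t ≤ i + T, t ∉ E → s' t = s t := fun t ht htE => funext fun μ => by
    simpa [chInput_encoder] using congrFun (h t ht htE) (Fin.castAdd B μ)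
  have hpar : ∀ t ≤ i + T, t ∉ E → ∀ σ, parity T x d t σ = 0 := fun t ht htE σ => by
    have := congrFun (h t ht htE) (Fin.natAdd T σ)
    simp only [chInput_encoder, Fin.append_right] at this
    rw [hd, parity_sub, this, sub_self]
  suffices ∀ j ≤ i, s' j = s j from this i le_rfl
  intro j
  induction j using Nat.strong_induction_on with
  | _ j ih =>
  intro hji
  by_cases hjE : j ∈ E
  swap
  · exact hsys j (by omega) hjE
  have hu := isBurstUndetectable_shift T x hE hjE (u := d) (fun t ht => ?_)
    (fun t ht htE => hd_eq_zero _ (hsys t (by omega) htE))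
    (fun t ht htE => hpar t (by omega) htE)
  · funext μ
    simpa [hd, zeroExt, sub_eq_zero] using hu.eq_zero hB hBT hx hx0 μ.isLt
  · rcases lt_or_ge t 0 with hneg | hnonneg
    · simp [hd, zeroExt_of_neg _ hneg]
    · exact hd_eq_zero _ (ih _ (by omega) (by omega))

end Code

end MaximallyShort

open MaximallyShort

/-- Maximally Short codes: for `B ≤ T` there is a streaming code with `k = T`, `n = T + B`
(rate `T/(T+B)`) and delay `T` that corrects every single-burst pattern of burst length at
most `B` per window of length `T+1`; this rate meets the Martinian–Sundberg bound
`B = T(1−R)/R` with equality. -/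
theorem stmt4 (B T : ℕ) (hB : 0 < B) (hBT : B ≤ T) :
    ∃ (F : Type) (_ : Field F) (_ : Fintype F)
      (f : Encoder F T (T + B)) (g : Decoder F T (T + B) T),
      (∀ E ∈ BurstChannel B T, Corrects f g E) ∧
      (B : ℝ) = T * (1 - (T : ℝ) / (T + B)) / ((T : ℝ) / (T + B)) := by
  obtain ⟨p, hBp, hp⟩ := Nat.exists_infinite_primes (B + 1)
  have := Fact.mk hp
  have hx := natCast_succ_injective (B := B) (show B < p by omega)
  have hx0 := natCast_succ_ne_zero (B := B) (show B < p by omega)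
  refine ⟨ZMod p, inferInstance, inferInstance, encoder T _, consistentDecoder _ T,
    fun E hE => corrects_consistentDecoder fun s s' i =>
      eq_of_chInput_encoder_eq T _ hB hBT hx hx0 hE, ?_⟩
  have : (0 : ℝ) < T := by exact_mod_cast hB.trans_le hBT
  field_simp
  ring
end

section
/- (Erasure decoding from the symbol column distance) Let C be any (n,k,m) convolutional code over a finite field F, let j ≥ 0, and let d_j be its j-th symbol column distance. For any erasure set E ⊆ {0,…,j} with |E| ≤ d_j − 1 and any two source sequences s, s' with s[0] ≠ s'[0], there exists an index i ∈ {0,…,j} \ E with x[i] ≠ x'[i]. Hence s[0] is uniquely determined by the unerased channel symbols whenever fewer than d_j of the symbols x[0],…,x[j] are erased. -/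
open scoped Classical

/-- The output `x[i] = Σ_{t=0}^{m} G_tᵀ s[i−t]` of the `(n,k,m)` convolutional code with
sub-generator matrices `G_0, …, G_m`, where `s[t] := 0` for `t < 0`. -/
noncomputable def convEnc {F : Type} [Field F] {k n m : ℕ}
    (G : Fin (m + 1) → Matrix (Fin k) (Fin n) F) (s : ℕ → Fin k → F) (i : ℕ) :
    Fin n → F :=
  ∑ t : Fin (m + 1), (if (t : ℕ) ≤ i then ((G t).transpose).mulVec (s (i - (t : ℕ))) else 0)

/-- The convolutional code is systematic: `G_0 = [I_k | 0]`. -/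
def IsSystematic {F : Type} [Field F] {k n m : ℕ}
    (G : Fin (m + 1) → Matrix (Fin k) (Fin n) F) : Prop :=
  ∀ (a : Fin k) (b : Fin n), G 0 a b = if (b : ℕ) = (a : ℕ) then 1 else 0

/-- The number of nonzero `F`-coordinates of the truncated codeword `(x[0], …, x[j])`. -/
noncomputable def wtc {F : Type} [Field F] {k n m : ℕ}
    (G : Fin (m + 1) → Matrix (Fin k) (Fin n) F) (s : ℕ → Fin k → F) (j : ℕ) : ℕ :=
  ∑ i ∈ Finset.range (j + 1),
    (Finset.univ.filter fun a : Fin n => convEnc G s i a ≠ 0).card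

/-- The number of indices `i ∈ {0, …, j}` with `x[i] ≠ 0` (symbol weight of the truncated
codeword). -/
noncomputable def symwt {F : Type} [Field F] {k n m : ℕ}
    (G : Fin (m + 1) → Matrix (Fin k) (Fin n) F) (s : ℕ → Fin k → F) (j : ℕ) : ℕ :=
  ((Finset.range (j + 1)).filter fun i => convEnc G s i ≠ 0).card

/-- A systematic convolutional code is Strongly-MDS if its `j`-th column distance
`d_j^c` (the least weight `wtc G s j` over sources with `s[0] ≠ 0`) equals
`(n−k)(j+1)+1` for all `j ∈ {0, …, m}`. -/
def IsStronglyMDS {F : Type} [Field F] {k n m : ℕ}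
    (G : Fin (m + 1) → Matrix (Fin k) (Fin n) F) : Prop :=
  ∀ j ≤ m, IsLeast {w : ℕ | ∃ s : ℕ → Fin k → F, s 0 ≠ 0 ∧ wtc G s j = w}
    ((n - k) * (j + 1) + 1)

/-!
The encoder is linear, so the codewords of `s` and `s'` differ exactly where the codeword of
`s - s'` is nonzero. As `(s - s')[0] ≠ 0`, that codeword is nonzero at no fewer than `d_j`
indices in `{0, …, j}`, more than the `|E| < d_j` erased ones.
-/

section ConvolutionalCode

variable {F : Type} [Field F] {k n m : ℕ} (G : Fin (m + 1) → Matrix (Fin k) (Fin n) F)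

lemma convEnc_sub (s s' : ℕ → Fin k → F) (i : ℕ) :
    convEnc G (s - s') i = convEnc G s i - convEnc G s' i := by
  unfold convEnc
  rw [← Finset.sum_sub_distrib]
  refine Finset.sum_congr rfl fun t _ => ?_
  split_ifs
  · exact Matrix.mulVec_sub _ _ _
  · exact (sub_zero 0).symm

lemma exists_convEnc_ne_zero_not_mem_of_card_lt_symwt {s : ℕ → Fin k → F} {j : ℕ}
    {E : Finset ℕ} (hE : E.card < symwt G s j) :
    ∃ i, i ≤ j ∧ i ∉ E ∧ convEnc G s i ≠ 0 := by
  obtain ⟨i, hi, hiE⟩ := Finset.exists_mem_notMem_of_card_lt_card hE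
  rw [Finset.mem_filter, Finset.mem_range] at hi
  exact ⟨i, Nat.lt_succ_iff.mp hi.1, hiE, hi.2⟩

end ConvolutionalCode

theorem stmt9_general {F : Type} [Field F] {k n m : ℕ}
    (G : Fin (m + 1) → Matrix (Fin k) (Fin n) F)
    (j : ℕ) (d : ℕ)
    (hd : IsLeast {w : ℕ | ∃ s : ℕ → Fin k → F, s 0 ≠ 0 ∧ symwt G s j = w} d)
    (E : Finset ℕ) (hcard : E.card < d) :
    ∀ s s' : ℕ → Fin k → F, s 0 ≠ s' 0 →
      ∃ i, i ≤ j ∧ i ∉ E ∧ convEnc G s i ≠ convEnc G s' i := by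
  intro s s' hss
  have hd_le : d ≤ symwt G (s - s') j := hd.2 ⟨s - s', sub_ne_zero.mpr hss, rfl⟩
  obtain ⟨i, hij, hiE, hi⟩ :=
    exists_convEnc_ne_zero_not_mem_of_card_lt_symwt G (hcard.trans_le hd_le)
  rw [convEnc_sub, sub_ne_zero] at hi
  exact ⟨i, hij, hiE, hi⟩

/-- Erasure decoding from the symbol column distance: for any `(n,k,m)` convolutional code
with `j`-th symbol column distance `d`, if fewer than `d` of the symbols `x[0], …, x[j]` are
erased (`|E| ≤ d − 1`), then any two source sequences differing at time `0` produce codewords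
differing at some unerased position in `{0, …, j}`; hence `s[0]` is uniquely determined by the
unerased channel symbols. -/
theorem stmt9 {F : Type} [Field F] [Fintype F] {k n m : ℕ}
    (hk : 1 ≤ k) (hkn : k < n)
    (G : Fin (m + 1) → Matrix (Fin k) (Fin n) F)
    (j : ℕ) (d : ℕ)
    (hd : IsLeast {w : ℕ | ∃ s : ℕ → Fin k → F, s 0 ≠ 0 ∧ symwt G s j = w} d)
    (E : Finset ℕ) (hE : ↑E ⊆ Set.Icc 0 j) (hcard : E.card < d) :
    ∀ s s' : ℕ → Fin k → F, s 0 ≠ s' 0 →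
      ∃ i, i ≤ j ∧ i ∉ E ∧ convEnc G s i ≠ convEnc G s' i :=
  stmt9_general G j d hd E hcard
end

section
/- (Optimal shift for partial recovery codes) Let T and B be real numbers with B ≥ 0 and T − B ≥ 1, and for Δ ∈ (B, T] define f(Δ) = (Δ(T−Δ) + (B+1)) / (Δ(T−Δ) + (B+1)(T−Δ+2)). Then Δ* := T + 1 − √(T−B) satisfies B < Δ* ≤ T, f(Δ) ≤ f(Δ*) for every Δ ∈ (B, T], and f(Δ*) = ((T+2)√(T−B) − 2(T−B)) / ((T+B+3)√(T−B) − 2(T−B)). -/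
/-!
Writing `y = T - Δ + 1 > 0`, the numerator is `y * g(y)` and the denominator `y * (g(y) + B + 1)`
with `g(y) = T + 2 - (y + (T - B) / y)`. Since `t ↦ t / (t + B + 1)` is increasing for `t > 0`,
maximizing `f` amounts to minimizing `y + (T - B) / y`, which by AM–GM happens at `y = √(T - B)`,
i.e. at `Δ = T + 1 - √(T - B)`, with minimum `2 √(T - B)`.
-/

open Real

lemma two_mul_sqrt_le_add_div {c y : ℝ} (hc : 0 ≤ c) (hy : 0 < y) : 2 * √c ≤ y + c / y := by
  have hsq : √c * √c = c := mul_self_sqrt hc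
  have hsplit : y + c / y - 2 * √c = (y - √c) ^ 2 / y := by
    field_simp
    linear_combination (-1) * hsq
  have : 0 ≤ (y - √c) ^ 2 / y := by positivity
  linarith

lemma div_add_le_div_add {a b c : ℝ} (ha : 0 < a) (hab : a ≤ b) (hc : 0 ≤ c) :
    a / (a + c) ≤ b / (b + c) := by
  rw [div_le_div_iff₀ (by linarith) (by linarith)]
  nlinarith

noncomputable section ShiftRate

variable (T B : ℝ)

def shiftRate (Δ : ℝ) : ℝ :=
  (Δ * (T - Δ) + (B + 1)) / (Δ * (T - Δ) + (B + 1) * (T - Δ + 2))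

def shiftGain (y : ℝ) : ℝ := T + 2 - (y + (T - B) / y)

variable {T B}

lemma mul_shiftGain {Δ : ℝ} (hΔ : Δ < T + 1) :
    (T - Δ + 1) * shiftGain T B (T - Δ + 1) = Δ * (T - Δ) + (B + 1) := by
  have hy : T - Δ + 1 ≠ 0 := by linarith
  unfold shiftGain
  field_simp
  ring

lemma shiftRate_eq_shiftGain {Δ : ℝ} (hΔ : Δ < T + 1) :
    shiftRate T B Δ =
      shiftGain T B (T - Δ + 1) / (shiftGain T B (T - Δ + 1) + (B + 1)) := by
  have hy : T - Δ + 1 ≠ 0 := by linarith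
  have hden : Δ * (T - Δ) + (B + 1) * (T - Δ + 2) =
      (T - Δ + 1) * (shiftGain T B (T - Δ + 1) + (B + 1)) := by
    rw [mul_add (T - Δ + 1), mul_shiftGain hΔ]
    ring
  rw [shiftRate, hden, ← mul_shiftGain hΔ, mul_div_mul_left _ _ hy]

lemma shiftGain_pos {Δ : ℝ} (hB : 0 ≤ B) (hBΔ : B < Δ) (hΔT : Δ ≤ T) :
    0 < shiftGain T B (T - Δ + 1) := by
  have hy : 0 < T - Δ + 1 := by linarith
  have hN : 0 < Δ * (T - Δ) + (B + 1) := by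
    nlinarith [mul_nonneg (hB.trans hBΔ.le) (sub_nonneg.2 hΔT)]
  rw [← mul_shiftGain (by linarith)] at hN
  exact pos_of_mul_pos_right hN hy.le

lemma shiftGain_le_of_pos {y : ℝ} (hTB : B ≤ T) (hy : 0 < y) :
    shiftGain T B y ≤ T + 2 - 2 * √(T - B) := by
  have := two_mul_sqrt_le_add_div (sub_nonneg.2 hTB) hy
  unfold shiftGain
  linarith

lemma shiftGain_sqrt : shiftGain T B √(T - B) = T + 2 - 2 * √(T - B) := by
  rw [shiftGain, div_sqrt]
  ring

end ShiftRate

/-- Optimal shift for partial recovery codes: for real `B ≥ 0`, `T − B ≥ 1`, the rate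
function `f(Δ) = (Δ(T−Δ)+(B+1))/(Δ(T−Δ)+(B+1)(T−Δ+2))` on `(B, T]` is maximized at
`Δ* = T + 1 − √(T−B)`, which lies in `(B, T]`, and
`f(Δ*) = ((T+2)√(T−B) − 2(T−B)) / ((T+B+3)√(T−B) − 2(T−B))`. -/
theorem stmt12 (T B : ℝ) (hB : 0 ≤ B) (hTB : 1 ≤ T - B) :
    let f : ℝ → ℝ := fun Δ =>
      (Δ * (T - Δ) + (B + 1)) / (Δ * (T - Δ) + (B + 1) * (T - Δ + 2))
    let Δs : ℝ := T + 1 - Real.sqrt (T - B)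
    B < Δs ∧ Δs ≤ T ∧
    (∀ Δ : ℝ, B < Δ → Δ ≤ T → f Δ ≤ f Δs) ∧
    f Δs = ((T + 2) * Real.sqrt (T - B) - 2 * (T - B)) /
      ((T + B + 3) * Real.sqrt (T - B) - 2 * (T - B)) := by
  intro f Δs
  change B < Δs ∧ Δs ≤ T ∧ (∀ Δ, B < Δ → Δ ≤ T → shiftRate T B Δ ≤ shiftRate T B Δs) ∧
    shiftRate T B Δs = _
  set s := √(T - B)
  have hs1 : 1 ≤ s := one_le_sqrt.2 hTB
  have hss : s * s = T - B := mul_self_sqrt (by linarith)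
  have hΔs : T - Δs + 1 = s := by simp only [Δs]; ring
  have hrate : shiftRate T B Δs = (T + 2 - 2 * s) / (T + 2 - 2 * s + (B + 1)) := by
    rw [shiftRate_eq_shiftGain (by linarith), hΔs, shiftGain_sqrt]
  refine ⟨by nlinarith, by linarith, fun Δ hBΔ hΔT => ?_, ?_⟩
  · rw [hrate, shiftRate_eq_shiftGain (by linarith)]
    exact div_add_le_div_add (shiftGain_pos hB hBΔ hΔT)
      (shiftGain_le_of_pos (by linarith) (by linarith)) (by linarith)
  · rw [hrate, ← hss, ← mul_div_mul_left _ _ (by positivity : s ≠ 0)]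
    ring_nf
end
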